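/- arXiv:2002.09342 — 3 statements merged into one kernel-verified Lean document; each statement's English description precedes it below -/
import Mathlib

section
/- Let X be a compact totally separated space and φ a homeomorphism. For a point x with infinite φ-orbit, the map mo_x: ⟦φ⟧ → ℤ defined by mo_x(ψ) = #(φ^{ℤ<0}(x) ∩ ψ⁻¹(φ^ℕ(x))) − #(φ^ℕ(x) ∩ ψ⁻¹(φ^{ℤ<0}(x))) is a group homomorphism, is independent of the choice of x within its orbit, and satisfies mo_x(φ) = 1 (so mo_x is surjective). -/
/-!
Since the orbit of `x` is infinite, `n ↦ φⁿ x` identifies it with `ℤ`, and an element `ψ` of the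
full group acts on it as a permutation `σ` of `ℤ` of bounded displacement. Then
`mo_{φᵐ x}(ψ)` is the relative index `#(σ⁻¹[m,∞) \ [m,∞)) - #([m,∞) \ σ⁻¹[m,∞))` of two
commensurable sets. Relative indices add along chains of commensurable sets and are invariant
under bijections; this gives additivity under composition and independence of `m`. For `φᵏ`,
`σ` is translation by `k`, whose index is `k`.
-/

variable {X : Type*} [TopologicalSpace X]

instance : Group (X ≃ₜ X) where
  mul f g := g.trans f
  one := Homeomorph.refl X
  inv := Homeomorph.symm
  mul_assoc f g h := rfl
  one_mul f := rfl
  mul_one f := rfl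
  inv_mul_cancel f := by
    ext x
    exact f.symm_apply_apply x

@[simp] lemma homeo_mul_apply (f g : X ≃ₜ X) (x : X) : (f * g) x = f (g x) := rfl
@[simp] lemma homeo_one_apply (x : X) : (1 : X ≃ₜ X) x = x := rfl

/-- The topological full group of a homeomorphism `φ`. -/
def fullGroupZ (φ : X ≃ₜ X) : Subgroup (X ≃ₜ X) where
  carrier := {ψ | ∃ κ : X → ℤ, IsLocallyConstant κ ∧ ∀ x, ψ x = (φ ^ κ x) x}
  one_mem' := ⟨0, IsLocallyConstant.const 0, fun x => by simp⟩
  mul_mem' := by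
    rintro ψ₁ ψ₂ ⟨κ₁, h₁, e₁⟩ ⟨κ₂, h₂, e₂⟩
    refine ⟨fun x => κ₁ (ψ₂ x) + κ₂ x, (h₁.comp_continuous ψ₂.continuous).add h₂, fun x => ?_⟩
    rw [zpow_add]
    simp only [homeo_mul_apply]
    rw [← e₂, ← e₁]
  inv_mem' := by
    rintro ψ ⟨κ, h, e⟩
    refine ⟨fun x => -κ (ψ.symm x), (h.comp_continuous ψ.symm.continuous).neg, fun x => ?_⟩
    have := e (ψ.symm x)
    conv_lhs => rw [show ψ⁻¹ x = ψ.symm x from rfl]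
    have h2 : (φ ^ (-κ (ψ.symm x))) (ψ (ψ.symm x)) = ψ.symm x := by
      rw [this, ← homeo_mul_apply, ← zpow_add]
      simp
    rw [ψ.apply_symm_apply] at h2
    exact h2.symm

/-- The forward orbit `{φⁿ x : n ∈ ℕ}`. -/
def posOrb (φ : X ≃ₜ X) (x : X) : Set X := {y | ∃ n : ℕ, y = (φ ^ (n : ℤ)) x}

/-- The backward (strictly negative) part of the orbit. -/
def negOrb (φ : X ≃ₜ X) (x : X) : Set X := {y | ∃ n : ℤ, n < 0 ∧ y = (φ ^ n) x}

/-- The index map `mo_x` on the topological full group. -/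
noncomputable def moFn (φ : X ≃ₜ X) (x : X) (ψ : X ≃ₜ X) : ℤ :=
  ((negOrb φ x ∩ (ψ : X → X) ⁻¹' posOrb φ x).ncard : ℤ) -
    ((posOrb φ x ∩ (ψ : X → X) ⁻¹' negOrb φ x).ncard : ℤ)

open Set Function

open scoped symmDiff

namespace Set

variable {α : Type*}

/-- The relative index of two commensurable sets; junk when `A ∆ B` is infinite, since `ncard`
of an infinite set is `0`. -/
noncomputable def relIndex (A B : Set α) : ℤ :=
  ((A \ B).ncard : ℤ) - ((B \ A).ncard : ℤ)

lemma relIndex_eq_ncard_inter_sub {A B S : Set α} (hS : S.Finite) (hAB : A ∆ B ⊆ S) :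
    relIndex A B = ((A ∩ S).ncard : ℤ) - ((B ∩ S).ncard : ℤ) := by
  have restrict : ∀ {U V : Set α}, U \ V ⊆ S → U \ V = (U ∩ S) \ (V ∩ S) := fun h => by
    ext a; have := @h a; simp only [mem_sdiff, mem_inter_iff] at this ⊢; tauto
  have h₁ := ncard_inter_add_ncard_sdiff_eq_ncard (A ∩ S) (B ∩ S) (hS.inter_of_right A)
  have h₂ := ncard_inter_add_ncard_sdiff_eq_ncard (B ∩ S) (A ∩ S) (hS.inter_of_right B)
  rw [inter_comm (B ∩ S)] at h₂
  rw [relIndex, restrict (subset_union_left.trans hAB), restrict (subset_union_right.trans hAB)]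
  omega

lemma relIndex_add_relIndex {A B C : Set α} (hAB : (A ∆ B).Finite) (hBC : (B ∆ C).Finite) :
    relIndex A B + relIndex B C = relIndex A C := by
  have hS := hAB.union hBC
  rw [relIndex_eq_ncard_inter_sub hS subset_union_left,
    relIndex_eq_ncard_inter_sub hS subset_union_right,
    relIndex_eq_ncard_inter_sub hS (symmDiff_triangle A B C)]
  ring

lemma relIndex_preimage {β : Type*} (σ : β ≃ α) (A B : Set α) :
    relIndex (σ ⁻¹' A) (σ ⁻¹' B) = relIndex A B := by
  rw [relIndex, relIndex, ← preimage_sdiff, ← preimage_sdiff, ← σ.image_symm_eq_preimage,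
    ← σ.image_symm_eq_preimage, ncard_image_of_injective _ σ.symm.injective,
    ncard_image_of_injective _ σ.symm.injective]

lemma relIndex_preimage_trans {σ τ : α ≃ α} {A : Set α} (hσ : ((σ ⁻¹' A) ∆ A).Finite)
    (hτ : ((τ ⁻¹' A) ∆ A).Finite) :
    relIndex ((σ.trans τ) ⁻¹' A) A = relIndex (σ ⁻¹' A) A + relIndex (τ ⁻¹' A) A := by
  have hτσ : (((σ.trans τ) ⁻¹' A) ∆ (σ ⁻¹' A)).Finite := by
    rw [Equiv.coe_trans, preimage_comp, ← preimage_symmDiff]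
    exact hτ.preimage_embedding σ.toEmbedding
  rw [← relIndex_add_relIndex hτσ hσ, Equiv.coe_trans, preimage_comp, relIndex_preimage]
  ring

lemma relIndex_preimage_self_congr (σ : α ≃ α) {A B : Set α} (hAB : (A ∆ B).Finite)
    (hA : ((σ ⁻¹' A) ∆ A).Finite) (hB : ((σ ⁻¹' B) ∆ B).Finite) :
    relIndex (σ ⁻¹' A) A = relIndex (σ ⁻¹' B) B := by
  have hσAB : ((σ ⁻¹' A) ∆ (σ ⁻¹' B)).Finite := by
    rw [← preimage_symmDiff]
    exact hAB.preimage_embedding σ.toEmbedding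
  have := (relIndex_add_relIndex hA hAB).trans (relIndex_add_relIndex hσAB hB).symm
  rw [relIndex_preimage] at this
  linarith

lemma relIndex_Ici_Ici (a b : ℤ) : relIndex (Ici a) (Ici b) = b - a := by
  simp only [relIndex, Ici_sdiff_Ici, ← Finset.coe_Ico, ncard_coe_finset, Int.card_Ico]
  omega

lemma finite_Ici_symmDiff_Ici (a b : ℤ) : (Ici a ∆ Ici b).Finite := by
  rw [symmDiff_def, Ici_sdiff_Ici, Ici_sdiff_Ici]
  exact (finite_Ico a b).union (finite_Ico b a)

end Set

namespace Equiv.Perm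

def BoundedDisplacement (σ : Equiv.Perm ℤ) : Prop := ∃ M, ∀ n, |σ n - n| ≤ M

lemma BoundedDisplacement.finite_preimage_Ici_symmDiff {σ : Equiv.Perm ℤ}
    (hσ : σ.BoundedDisplacement) (m : ℤ) : ((σ ⁻¹' Ici m) ∆ Ici m).Finite := by
  obtain ⟨M, hM⟩ := hσ
  refine (finite_Icc (m - M) (m + M)).subset fun n hn => ?_
  have := abs_le.1 (hM n)
  simp only [mem_symmDiff, mem_preimage, mem_Ici, mem_Icc] at hn ⊢
  omega

end Equiv.Perm

lemma zpow_apply_zpow_apply (φ : X ≃ₜ X) (x : X) (a b : ℤ) :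
    (φ ^ a) ((φ ^ b) x) = (φ ^ (a + b)) x := by
  rw [zpow_add, homeo_mul_apply]

lemma injective_zpow_apply (φ : X ≃ₜ X) {x : X}
    (hinf : (range fun n : ℤ => (φ ^ n) x).Infinite) :
    Injective fun n : ℤ => (φ ^ n) x := by
  intro a b (hab : (φ ^ a) x = (φ ^ b) x)
  by_contra hne
  wlog hlt : a < b generalizing a b
  · exact this hab.symm (Ne.symm hne) (lt_of_le_of_ne (not_lt.1 hlt) (Ne.symm hne))
  have hper : Periodic (fun n : ℤ => (φ ^ n) x) (b - a) := fun n =>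
    calc (φ ^ (n + (b - a))) x = (φ ^ (n - a)) ((φ ^ b) x) := by
          rw [zpow_apply_zpow_apply, show n - a + b = n + (b - a) by ring]
      _ = (φ ^ n) x := by rw [← hab, zpow_apply_zpow_apply, sub_add_cancel]
  exact hinf (hper.image_Ioc (sub_pos.2 hlt) 0 ▸ (finite_Ioc _ _).image _)

lemma zpow_mem_fullGroupZ (φ : X ≃ₜ X) (k : ℤ) : φ ^ k ∈ fullGroupZ φ :=
  ⟨fun _ => k, IsLocallyConstant.const k, fun _ => rfl⟩

/-- The displacement is bounded because `κ` is locally constant on a compact space, hence takes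
finitely many values. -/
lemma exists_perm_of_mem_fullGroupZ [CompactSpace X] (φ : X ≃ₜ X) {x : X}
    (hinj : Injective fun n : ℤ => (φ ^ n) x) {ψ : X ≃ₜ X} (hψ : ψ ∈ fullGroupZ φ) :
    ∃ σ : Equiv.Perm ℤ, σ.BoundedDisplacement ∧ ∀ n, ψ ((φ ^ n) x) = (φ ^ σ n) x := by
  obtain ⟨κ, hκ, eκ⟩ := hψ
  obtain ⟨κ', -, eκ'⟩ := (fullGroupZ φ).inv_mem ⟨κ, hκ, eκ⟩
  have hf : ∀ n, ψ ((φ ^ n) x) = (φ ^ (κ ((φ ^ n) x) + n)) x := fun n => by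
    rw [eκ, zpow_apply_zpow_apply]
  have hg : ∀ n, ψ.symm ((φ ^ n) x) = (φ ^ (κ' ((φ ^ n) x) + n)) x := fun n => by
    rw [← ψ.inv_apply, eκ', zpow_apply_zpow_apply]
  let σ : Equiv.Perm ℤ :=
    { toFun := fun n => κ ((φ ^ n) x) + n
      invFun := fun n => κ' ((φ ^ n) x) + n
      left_inv := fun n => hinj <| by simp only; rw [← hg, ← hf, ψ.symm_apply_apply]
      right_inv := fun n => hinj <| by simp only; rw [← hf, ← hg, ψ.apply_symm_apply] }
  obtain ⟨M, hM⟩ := (hκ.range_finite.image fun t => |t|).bddAbove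
  exact ⟨σ, ⟨M, fun n => by simpa [σ] using hM ⟨_, mem_range_self ((φ ^ n) x), rfl⟩⟩, hf⟩

lemma posOrb_zpow_apply (φ : X ≃ₜ X) (x : X) (m : ℤ) :
    posOrb φ ((φ ^ m) x) = (fun n : ℤ => (φ ^ n) x) '' Ici m := by
  ext y
  simp only [posOrb, mem_ofPred_eq, mem_image, mem_Ici, zpow_apply_zpow_apply]
  constructor
  · rintro ⟨n, rfl⟩
    exact ⟨n + m, by omega, rfl⟩
  · rintro ⟨k, hk, rfl⟩
    exact ⟨(k - m).toNat, by rw [Int.toNat_sub_of_le hk, sub_add_cancel]⟩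

lemma negOrb_zpow_apply (φ : X ≃ₜ X) (x : X) (m : ℤ) :
    negOrb φ ((φ ^ m) x) = (fun n : ℤ => (φ ^ n) x) '' Iio m := by
  ext y
  simp only [negOrb, mem_ofPred_eq, mem_image, mem_Iio, zpow_apply_zpow_apply]
  constructor
  · rintro ⟨n, hn, rfl⟩
    exact ⟨n + m, by omega, rfl⟩
  · rintro ⟨k, hk, rfl⟩
    exact ⟨k - m, by omega, by rw [sub_add_cancel]⟩

lemma image_inter_preimage_image_of_semiconj {α β : Type*} {e : α → β} (he : Injective e)
    {ψ : β → β} {σ : α → α} (h : ψ ∘ e = e ∘ σ) (A B : Set α) :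
    e '' A ∩ ψ ⁻¹' (e '' B) = e '' (A ∩ σ ⁻¹' B) := by
  rw [← image_inter_preimage, ← preimage_comp, h, preimage_comp, preimage_image_eq _ he]

lemma moFn_zpow_apply_eq_relIndex (φ : X ≃ₜ X) {x : X}
    (hinj : Injective fun n : ℤ => (φ ^ n) x) {ψ : X ≃ₜ X} {σ : Equiv.Perm ℤ}
    (hσ : ∀ n, ψ ((φ ^ n) x) = (φ ^ σ n) x) (m : ℤ) :
    moFn φ ((φ ^ m) x) ψ = relIndex (σ ⁻¹' Ici m) (Ici m) := by
  have hsemi := image_inter_preimage_image_of_semiconj hinj (σ := σ) (funext hσ)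
  rw [moFn, posOrb_zpow_apply, negOrb_zpow_apply, hsemi, hsemi,
    ncard_image_of_injective _ hinj, ncard_image_of_injective _ hinj, relIndex,
    ← compl_Ici, preimage_compl, inter_comm (Ici m)ᶜ, ← sdiff_eq, ← sdiff_eq]

lemma moFn_eq_relIndex (φ : X ≃ₜ X) {x : X} (hinj : Injective fun n : ℤ => (φ ^ n) x)
    {ψ : X ≃ₜ X} {σ : Equiv.Perm ℤ} (hσ : ∀ n, ψ ((φ ^ n) x) = (φ ^ σ n) x) :
    moFn φ x ψ = relIndex (σ ⁻¹' Ici 0) (Ici 0) := by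
  simpa using moFn_zpow_apply_eq_relIndex φ hinj hσ 0

lemma moFn_zpow (φ : X ≃ₜ X) {x : X} (hinj : Injective fun n : ℤ => (φ ^ n) x) (k : ℤ) :
    moFn φ x (φ ^ k) = k := by
  have hpre : Equiv.addLeft k ⁻¹' Ici (0 : ℤ) = Ici (-k) := by
    ext n; simp only [mem_preimage, Equiv.coe_addLeft, mem_Ici]; omega
  rw [moFn_eq_relIndex φ hinj (σ := Equiv.addLeft k) (zpow_apply_zpow_apply φ x k), hpre,
    relIndex_Ici_Ici, sub_neg_eq_add, zero_add]

theorem statement12_general [CompactSpace X] (φ : X ≃ₜ X) (x : X)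
    (hinf : (Set.range fun n : ℤ => (φ ^ n) x).Infinite) :
    (∀ ψ₁ ψ₂ : X ≃ₜ X, ψ₁ ∈ fullGroupZ φ → ψ₂ ∈ fullGroupZ φ →
      moFn φ x (ψ₁ * ψ₂) = moFn φ x ψ₁ + moFn φ x ψ₂) ∧
    (∀ m : ℤ, ∀ ψ ∈ fullGroupZ φ, moFn φ ((φ ^ m) x) ψ = moFn φ x ψ) ∧
    moFn φ x φ = 1 ∧
    Function.Surjective fun ψ : ↥(fullGroupZ φ) => moFn φ x (ψ : X ≃ₜ X) := by
  have hinj := injective_zpow_apply φ hinf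
  refine ⟨fun ψ₁ ψ₂ h₁ h₂ => ?_, fun m ψ hψ => ?_, by simpa using moFn_zpow φ hinj 1,
    fun k => ⟨⟨φ ^ k, zpow_mem_fullGroupZ φ k⟩, moFn_zpow φ hinj k⟩⟩
  · obtain ⟨σ₁, hb₁, hσ₁⟩ := exists_perm_of_mem_fullGroupZ φ hinj h₁
    obtain ⟨σ₂, hb₂, hσ₂⟩ := exists_perm_of_mem_fullGroupZ φ hinj h₂
    have hσ : ∀ n, (ψ₁ * ψ₂) ((φ ^ n) x) = (φ ^ (σ₂.trans σ₁) n) x := fun n => by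
      rw [homeo_mul_apply, hσ₂, hσ₁, Equiv.trans_apply]
    rw [moFn_eq_relIndex φ hinj hσ, moFn_eq_relIndex φ hinj hσ₁, moFn_eq_relIndex φ hinj hσ₂,
      relIndex_preimage_trans (hb₂.finite_preimage_Ici_symmDiff 0)
        (hb₁.finite_preimage_Ici_symmDiff 0), add_comm]
  · obtain ⟨σ, hb, hσ⟩ := exists_perm_of_mem_fullGroupZ φ hinj hψ
    rw [moFn_zpow_apply_eq_relIndex φ hinj hσ m, moFn_eq_relIndex φ hinj hσ]
    exact relIndex_preimage_self_congr σ (finite_Ici_symmDiff_Ici m 0)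
      (hb.finite_preimage_Ici_symmDiff m) (hb.finite_preimage_Ici_symmDiff 0)

/-- for a point `x` with infinite orbit, `mo_x` is a group homomorphism
on the topological full group, independent of the choice of the base point within the
orbit, and sends `φ` to `1` (hence is surjective). -/
theorem statement12 [CompactSpace X] [TotallySeparatedSpace X] (φ : X ≃ₜ X) (x : X)
    (hinf : (Set.range fun n : ℤ => (φ ^ n) x).Infinite) :
    (∀ ψ₁ ψ₂ : X ≃ₜ X, ψ₁ ∈ fullGroupZ φ → ψ₂ ∈ fullGroupZ φ →
      moFn φ x (ψ₁ * ψ₂) = moFn φ x ψ₁ + moFn φ x ψ₂) ∧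
    (∀ m : ℤ, ∀ ψ ∈ fullGroupZ φ, moFn φ ((φ ^ m) x) ψ = moFn φ x ψ) ∧
    moFn φ x φ = 1 ∧
    Function.Surjective fun ψ : ↥(fullGroupZ φ) => moFn φ x (ψ : X ≃ₜ X) :=
  statement12_general φ x hinf
end

section
/- Let X be a compact totally separated space and φ a minimal homeomorphism. Then for every x ∈ X, the stabilizer in ⟦φ⟧ of the forward orbit {φⁿ(x) : n ≥ 0} is a locally finite group (every finitely generated subgroup is finite). -/
variable {X : Type*} [TopologicalSpace X]

/-!
Conjugating by the orbit map `n ↦ φⁿ x`, which is injective unless `X` is finite, the full group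
acts on `ℤ`, faithfully because the orbit is dense; an element preserving the forward orbit
preserves the cut `{n < 0}`. The exponents of finitely many generators are locally constant and
bounded by some `N`, so at every return time `m` of `x` to a small enough neighbourhood `W` of `x`
the generators act on `[m - N, m + N]` as on `[-N, N]`, hence preserve the cut `{n < m}`. By
minimality and compactness the return times are syndetic, so the generated group preserves the
bounded blocks between consecutive return times, and its action on a block is determined by the
action of the generators there. There are finitely many such patterns, so the group is finite.
-/

open Equiv Function Set

def cutStabilizer (R : Set ℤ) : Subgroup (Perm ℤ) where
  carrier := {σ | ∀ m ∈ R, ∀ n, σ n < m ↔ n < m}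
  mul_mem' hσ hτ m hm n := (hσ m hm _).trans (hτ m hm n)
  one_mem' _ _ _ := Iff.rfl
  inv_mem' {σ} hσ m hm n := by simpa using (hσ m hm (σ⁻¹ n)).symm

lemma mem_Ico_iff_of_mem_cutStabilizer {R : Set ℤ} {σ : Perm ℤ} (hσ : σ ∈ cutStabilizer R)
    {p q : ℤ} (hp : p ∈ R) (hq : q ∈ R) (n : ℤ) : σ n ∈ Ico p q ↔ n ∈ Ico p q := by
  simp only [mem_Ico, ← not_lt, hσ p hp, hσ q hq]

lemma abs_apply_sub_lt_of_mem_cutStabilizer {R : Set ℤ} {B : ℕ}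
    (hR : ∀ n, ∃ r ∈ R, n < r ∧ r ≤ n + B) {σ : Perm ℤ} (hσ : σ ∈ cutStabilizer R) (n : ℤ) :
    |σ n - n| < B := by
  obtain ⟨p, hp, hp₁, hp₂⟩ := hR (n - B)
  obtain ⟨q, hq, hq₁, hq₂⟩ := hR n
  have := (mem_Ico_iff_of_mem_cutStabilizer hσ hp hq n).2 (mem_Ico.2 ⟨by omega, hq₁⟩)
  rw [mem_Ico] at this
  rw [abs_lt]
  omega

def blockMatch (p q ℓ : ℤ) : Subgroup (Perm ℤ) where
  carrier := {σ | (∀ n, σ n ∈ Ico p (p + ℓ) ↔ n ∈ Ico p (p + ℓ)) ∧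
    (∀ n, σ n ∈ Ico q (q + ℓ) ↔ n ∈ Ico q (q + ℓ)) ∧ ∀ j ∈ Ico 0 ℓ, σ (q + j) - q = σ (p + j) - p}
  mul_mem' := by
    rintro σ τ ⟨hσp, hσq, hσ⟩ ⟨hτp, hτq, hτ⟩
    refine ⟨fun n => (hσp _).trans (hτp n), fun n => (hσq _).trans (hτq n), fun j hj => ?_⟩
    have hk := (hτp (p + j)).2 (by rw [mem_Ico] at hj ⊢; omega)
    have hτj := hτ j hj
    rw [mem_Ico] at hj hk
    have := hσ (τ (p + j) - p) (mem_Ico.2 (by omega))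
    simp only [Perm.mul_apply]
    rwa [show τ (q + j) = q + (τ (p + j) - p) by omega, ← add_sub_cancel p (τ (p + j)),
      add_sub_cancel_left]
  one_mem' := ⟨fun _ => Iff.rfl, fun _ => Iff.rfl, fun j _ => by simp⟩
  inv_mem' := by
    rintro σ ⟨hp, hq, h⟩
    refine ⟨fun n => by simpa using (hp (σ⁻¹ n)).symm, fun n => by simpa using (hq (σ⁻¹ n)).symm,
      fun j hj => ?_⟩
    obtain ⟨k, hk, hσk⟩ : ∃ k ∈ Ico 0 ℓ, σ (p + k) = p + j := by
      refine ⟨σ⁻¹ (p + j) - p, ?_, by simp⟩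
      have := (hp (σ⁻¹ (p + j))).1 (by simpa [mem_Ico] using hj)
      rw [mem_Ico] at this ⊢
      omega
    have := h k hk
    rw [Perm.inv_eq_iff_eq.2 hσk.symm, Perm.inv_eq_iff_eq.2 (show q + j = σ (q + k) by omega)]
    ring

lemma closure_le_blockMatch {S : Set (Perm ℤ)} {R : Set ℤ} (hSR : S ⊆ cutStabilizer R)
    {p q ℓ : ℤ} (hp : p ∈ R) (hpℓ : p + ℓ ∈ R) (hq : q ∈ R) (hqℓ : q + ℓ ∈ R)
    (hS : ∀ σ ∈ S, ∀ j ∈ Ico 0 ℓ, σ (q + j) - q = σ (p + j) - p) :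
    Subgroup.closure S ≤ blockMatch p q ℓ :=
  (Subgroup.closure_le _).2 fun σ hσ =>
    ⟨mem_Ico_iff_of_mem_cutStabilizer (hSR hσ) hp hpℓ,
      mem_Ico_iff_of_mem_cutStabilizer (hSR hσ) hq hqℓ, hS σ hσ⟩

lemma Set.Finite.of_forall_factorsThrough {ι T β : Type*} {typ : ι → T}
    (htyp : (range typ).Finite) {V : Set β} (hV : V.Finite) {A : Set (ι → β)}
    (hA : ∀ u ∈ A, FactorsThrough u typ ∧ ∀ i, u i ∈ V) : A.Finite := by
  have := htyp.to_subtype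
  refine Set.Finite.of_finite_image (f := fun u (t : range typ) => u t.2.choose)
    ((Set.Finite.pi fun _ => hV).subset ?_) fun u hu v hv huv => funext fun i => ?_
  · rintro _ ⟨u, hu, rfl⟩ t -
    exact (hA u hu).2 _
  · have hi : typ (⟨typ i, i, rfl⟩ : range typ).2.choose = typ i :=
      (⟨typ i, i, rfl⟩ : range typ).2.choose_spec
    rw [← (hA u hu).1 hi, ← (hA v hv).1 hi]
    exact congrFun huv ⟨typ i, i, rfl⟩

section BlockType

variable {S : Set (Perm ℤ)} {R : Set ℤ} {B : ℕ} {next : ℤ → ℤ}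

variable (S B next) in
/-- For `n` in the block `[next (n - B), next n)`: its position in the block, the length of the
block and the values of the elements of `S` on it, measured from the start of the block. -/
def blockType (n : ℤ) : ℤ × ℤ × (S → Icc (0 : ℤ) (2 * B) → ℤ) :=
  (n - next (n - B), next n - next (n - B), fun σ j => σ.1 (next (n - B) + j) - next (n - B))

lemma finite_range_blockType (hS : S.Finite) (hSR : S ⊆ cutStabilizer R)
    (hnextR : ∀ n, next n ∈ R) (hnext : ∀ n, n < next n ∧ next n ≤ n + B) :
    (range (blockType S B next)).Finite := by
  have := hS.to_subtype
  have hpat : (Set.pi univ fun _ : S => Set.pi univ fun _ : Icc (0 : ℤ) (2 * B) =>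
      Icc (-(B : ℤ)) (3 * B)).Finite := Set.Finite.pi fun _ => Set.Finite.pi fun _ => finite_Icc _ _
  refine ((finite_Icc 0 (B : ℤ)).prod ((finite_Icc 0 (2 * (B : ℤ))).prod hpat)).subset ?_
  rintro _ ⟨n, rfl⟩
  simp only [blockType, mem_prod, mem_Icc, mem_pi, mem_univ, true_implies]
  have := hnext (n - B)
  have := hnext n
  refine ⟨⟨by omega, by omega⟩, ⟨by omega, by omega⟩, fun σ j => ?_⟩
  have hσ := abs_apply_sub_lt_of_mem_cutStabilizer (fun n => ⟨next n, hnextR n, hnext n⟩)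
    (hSR σ.2) (next (n - B) + j)
  have hj := mem_Icc.1 j.2
  rw [abs_lt] at hσ
  exact ⟨by omega, by omega⟩

lemma factorsThrough_blockType (hSR : S ⊆ cutStabilizer R) (hnextR : ∀ n, next n ∈ R)
    (hnext : ∀ n, n < next n ∧ next n ≤ n + B) {g : Perm ℤ} (hg : g ∈ Subgroup.closure S) :
    FactorsThrough (fun n => g n - n) (blockType S B next) := by
  intro n n' h
  simp only [blockType, Prod.mk.injEq] at h
  obtain ⟨hpos, hlen, hgen⟩ := h
  set p := next (n - B)
  set q := next (n' - B)
  have := hnext (n - B)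
  have := hnext n
  have hpℓ : p + (next n - p) = next n := add_sub_cancel p _
  have hqℓ : q + (next n - p) = next n' := by omega
  have hblock := closure_le_blockMatch hSR (hnextR _) (hpℓ ▸ hnextR n) (hnextR _)
    (hqℓ ▸ hnextR n') fun σ hσ j hj => by
      rw [mem_Ico] at hj
      exact (congrFun (congrFun hgen ⟨σ, hσ⟩) ⟨j, mem_Icc.2 ⟨hj.1, by omega⟩⟩).symm
  have := (hblock hg).2.2 (n - p) (mem_Ico.2 ⟨by omega, by omega⟩)
  rw [show q + (n - p) = n' by omega, add_sub_cancel] at this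
  dsimp only
  omega

end BlockType

theorem finite_closure_of_subset_cutStabilizer {S : Set (Perm ℤ)} (hS : S.Finite) {R : Set ℤ}
    {B : ℕ} (hR : ∀ n, ∃ r ∈ R, n < r ∧ r ≤ n + B) (hSR : S ⊆ cutStabilizer R) :
    (Subgroup.closure S : Set (Perm ℤ)).Finite := by
  choose next hnextR hnext using hR
  refine Set.Finite.of_finite_image (f := fun (g : Perm ℤ) n => g n - n)
    (Set.Finite.of_forall_factorsThrough (finite_range_blockType hS hSR hnextR hnext)
      (finite_Icc (-(B : ℤ)) B) ?_) fun g _ h _ hgh => Equiv.ext fun n => by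
        simpa using congrFun hgh n
  rintro _ ⟨g, hg, rfl⟩
  refine ⟨factorsThrough_blockType hSR hnextR hnext hg, fun n => mem_Icc.2 ?_⟩
  have := abs_apply_sub_lt_of_mem_cutStabilizer (fun n => ⟨next n, hnextR n, hnext n⟩)
    ((Subgroup.closure_le _).2 hSR hg) n
  rw [abs_lt] at this
  dsimp only
  omega

lemma mem_cutStabilizer_of_apply_add {σ : Perm ℤ} {N : ℤ} (hN : ∀ n, |σ n - n| ≤ N)
    (h₀ : ∀ n, σ n < 0 ↔ n < 0) {R : Set ℤ} (hR : ∀ m ∈ R, ∀ j, |j| ≤ N → σ (m + j) = m + σ j) :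
    σ ∈ cutStabilizer R := by
  intro m hm n
  by_cases hj : |n - m| ≤ N
  · have := hR m hm (n - m) hj
    rw [add_sub_cancel] at this
    rw [this, add_lt_iff_neg_left, h₀, sub_neg]
  · have := hN n
    rw [abs_le] at this
    rw [abs_le] at hj
    omega

section OrbitPerm

variable (φ : X ≃ₜ X) (x : X)

def orbitMap (n : ℤ) : X := (φ ^ n) x

lemma orbitMap_add (m n : ℤ) : orbitMap φ x (m + n) = (φ ^ m) (orbitMap φ x n) := by
  simp [orbitMap, zpow_add]

variable {φ x}

theorem injective_orbitMap [T2Space X] [Infinite X] (hd : Dense (range (orbitMap φ x))) :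
    Injective (orbitMap φ x) := by
  intro a b hab
  by_contra hne
  have hper : ⇑(φ ^ (b - a)) = id := by
    refine Continuous.ext_on hd (φ ^ (b - a)).continuous continuous_id ?_
    rintro _ ⟨n, rfl⟩
    rw [id, ← orbitMap_add, show b - a + n = n - a + b by ring, orbitMap_add, ← hab,
      ← orbitMap_add, sub_add_cancel]
  have hfin : (range (orbitMap φ x)).Finite := by
    have hφ : IsOfFinOrder φ := isOfFinOrder_iff_zpow_eq_one.2
      ⟨b - a, sub_ne_zero.2 (Ne.symm hne), Homeomorph.ext (congrFun hper)⟩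
    refine (hφ.finite_zpowers.image fun g : X ≃ₜ X => g x).subset ?_
    rintro _ ⟨n, rfl⟩
    exact ⟨φ ^ n, ⟨n, rfl⟩, rfl⟩
  exact infinite_univ (hd.closure_eq ▸ hfin.isClosed.closure_eq ▸ hfin)

lemma exists_orbitMap_eq_apply {g : X ≃ₜ X} (hg : g ∈ fullGroupZ φ) (n : ℤ) :
    ∃ m, orbitMap φ x m = g (orbitMap φ x n) := by
  obtain ⟨κ, -, hκ⟩ := hg
  exact ⟨κ (orbitMap φ x n) + n, by rw [orbitMap_add, hκ]⟩

lemma orbitMap_invFun_apply (g : fullGroupZ φ) (n : ℤ) :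
    orbitMap φ x (invFun (orbitMap φ x) (g.1 (orbitMap φ x n))) = g.1 (orbitMap φ x n) :=
  invFun_eq (exists_orbitMap_eq_apply g.2 n)

variable (φ x) in
/-- `orbitPerm φ x hinj g n = m` when `g (φⁿ x) = φᵐ x`. -/
noncomputable def orbitPerm (hinj : Injective (orbitMap φ x)) : fullGroupZ φ →* Perm ℤ where
  toFun g :=
    { toFun n := invFun (orbitMap φ x) (g.1 (orbitMap φ x n))
      invFun n := invFun (orbitMap φ x) (g⁻¹.1 (orbitMap φ x n))
      left_inv n := by
        simp only [orbitMap_invFun_apply]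
        simpa using leftInverse_invFun hinj n
      right_inv n := by
        simp only [orbitMap_invFun_apply]
        simpa using leftInverse_invFun hinj n }
  map_one' := Equiv.ext fun n => leftInverse_invFun hinj n
  map_mul' g h := Equiv.ext fun n => by simp [orbitMap_invFun_apply]

lemma orbitMap_orbitPerm (hinj : Injective (orbitMap φ x)) (g : fullGroupZ φ) (n : ℤ) :
    orbitMap φ x (orbitPerm φ x hinj g n) = g.1 (orbitMap φ x n) :=
  orbitMap_invFun_apply g n

theorem injective_orbitPerm [T2Space X] (hinj : Injective (orbitMap φ x))
    (hd : Dense (range (orbitMap φ x))) : Injective (orbitPerm φ x hinj) := by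
  intro g h hgh
  refine Subtype.ext (Homeomorph.ext (congrFun ?_))
  refine Continuous.ext_on hd g.1.continuous h.1.continuous ?_
  rintro _ ⟨n, rfl⟩
  rw [← orbitMap_orbitPerm hinj, ← orbitMap_orbitPerm hinj, hgh]

lemma orbitPerm_apply_of_eq_zpow (hinj : Injective (orbitMap φ x)) {g : fullGroupZ φ}
    {κ : X → ℤ} (hκ : ∀ y, g.1 y = (φ ^ κ y) y) (n : ℤ) :
    orbitPerm φ x hinj g n = n + κ (orbitMap φ x n) :=
  hinj (by rw [orbitMap_orbitPerm, hκ, add_comm, orbitMap_add])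

lemma orbitPerm_neg_iff (hinj : Injective (orbitMap φ x)) {g : fullGroupZ φ}
    (hg : (g.1 : X → X) '' {y | ∃ n : ℕ, y = (φ ^ (n : ℤ)) x} = {y | ∃ n : ℕ, y = (φ ^ (n : ℤ)) x})
    (n : ℤ) : orbitPerm φ x hinj g n < 0 ↔ n < 0 := by
  set O := {y | ∃ n : ℕ, y = (φ ^ (n : ℤ)) x}
  have hO (m : ℤ) : orbitMap φ x m ∈ O ↔ 0 ≤ m :=
    ⟨fun ⟨k, hk⟩ => hinj hk ▸ k.cast_nonneg,
      fun hm => ⟨m.toNat, by rw [Int.toNat_of_nonneg hm]; rfl⟩⟩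
  have := g.1.injective.mem_set_image (s := O) (a := orbitMap φ x n)
  rwa [hg, ← orbitMap_orbitPerm hinj, hO, hO, ← not_lt, ← not_lt, not_iff_not] at this

lemma exists_forall_exists_abs_le_zpow_mem [CompactSpace X]
    (hmin : ∀ y : X, Dense (range fun n : ℤ => (φ ^ n) y)) {W : Set X} (hW : IsOpen W)
    (hne : W.Nonempty) : ∃ B : ℕ, ∀ y, ∃ k : ℤ, |k| ≤ B ∧ (φ ^ k) y ∈ W := by
  obtain ⟨B, hB⟩ := isCompact_univ.elim_directed_cover
    (fun B : ℕ => {y | ∃ k : ℤ, |k| ≤ B ∧ (φ ^ k) y ∈ W})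
    (fun B => isOpen_iff_forall_mem_open.2 fun y ⟨k, hk, hy⟩ =>
      ⟨(φ ^ k) ⁻¹' W, fun z hz => ⟨k, hk, hz⟩, hW.preimage (φ ^ k).continuous, hy⟩)
    (fun y _ => by
      obtain ⟨_, ⟨k, rfl⟩, hk⟩ := (hmin y).exists_mem_open hW hne
      exact mem_iUnion.2 ⟨k.natAbs, k, Int.abs_eq_natAbs k ▸ le_rfl, hk⟩)
    (Monotone.directed_le fun B B' h y ⟨k, hk, hy⟩ => ⟨k, hk.trans (by exact_mod_cast h), hy⟩)
  exact ⟨B, fun y => hB (mem_univ y)⟩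

theorem exists_cutStabilizer_orbitPerm [CompactSpace X]
    (hmin : ∀ y : X, Dense (range fun n : ℤ => (φ ^ n) y)) (hinj : Injective (orbitMap φ x))
    {s : Set (fullGroupZ φ)} (hs : s.Finite)
    (hO : ∀ g ∈ s, (g.1 : X → X) '' {y | ∃ n : ℕ, y = (φ ^ (n : ℤ)) x} =
      {y | ∃ n : ℕ, y = (φ ^ (n : ℤ)) x}) :
    ∃ (R : Set ℤ) (B : ℕ), (∀ n, ∃ r ∈ R, n < r ∧ r ≤ n + B) ∧
      ∀ g ∈ s, orbitPerm φ x hinj g ∈ cutStabilizer R := by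
  choose κ hκlc hκ using fun g : fullGroupZ φ => g.2
  obtain ⟨N, hN⟩ : ∃ N : ℤ, ∀ g ∈ s, ∀ y, |κ g y| ≤ N := by
    obtain ⟨N, hN⟩ := (hs.biUnion fun g _ => ((hκlc g).comp abs).range_finite).bddAbove
    exact ⟨N, fun g hg y => hN (mem_biUnion hg ⟨y, rfl⟩)⟩
  set W := ⋂ g ∈ s, ⋂ j ∈ Icc (-N) N, (φ ^ j) ⁻¹' (κ g ⁻¹' {κ g ((φ ^ j) x)})
  have hW : IsOpen W := hs.isOpen_biInter fun g _ => (finite_Icc _ _).isOpen_biInter fun j _ =>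
    ((hκlc g).isOpen_fiber _).preimage (φ ^ j).continuous
  have hxW : x ∈ W := by simp [W]
  obtain ⟨B, hB⟩ := exists_forall_exists_abs_le_zpow_mem hmin hW ⟨x, hxW⟩
  refine ⟨{m | orbitMap φ x m ∈ W}, 2 * B + 1, fun n => ?_, fun g hg => ?_⟩
  · obtain ⟨k, hk, hkW⟩ := hB (orbitMap φ x (n + B + 1))
    rw [abs_le] at hk
    refine ⟨k + (n + B + 1), by rwa [mem_ofPred_eq, orbitMap_add], by omega, by push_cast; omega⟩
  refine mem_cutStabilizer_of_apply_add (N := N) (fun n => ?_) (orbitPerm_neg_iff hinj (hO g hg))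
    fun m hm j hj => ?_
  · rw [orbitPerm_apply_of_eq_zpow hinj (hκ g), add_sub_cancel_left]
    exact hN g hg _
  · simp only [W, mem_ofPred_eq, mem_iInter, mem_preimage, mem_singleton_iff, mem_Icc] at hm
    have : κ g (orbitMap φ x (m + j)) = κ g (orbitMap φ x j) := by
      rw [add_comm, orbitMap_add]
      exact hm g hg j (abs_le.1 hj)
    rw [orbitPerm_apply_of_eq_zpow hinj (hκ g), orbitPerm_apply_of_eq_zpow hinj (hκ g), this,
      add_assoc]

end OrbitPerm

/-- Putnam's lemma: for a minimal homeomorphism `φ` of a compact totally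
separated space, the stabilizer in the topological full group of the forward orbit of any
point is locally finite: any finite set of elements of the full group preserving the
forward orbit generates a finite subgroup. -/
theorem statement14 [CompactSpace X] [TotallySeparatedSpace X] (φ : X ≃ₜ X)
    (hmin : ∀ x : X, Dense (Set.range fun n : ℤ => (φ ^ n) x)) (x : X)
    (s : Finset (X ≃ₜ X))
    (hs : ∀ f ∈ s, f ∈ fullGroupZ φ ∧
      (f : X → X) '' {y | ∃ n : ℕ, y = (φ ^ (n : ℤ)) x} = {y | ∃ n : ℕ, y = (φ ^ (n : ℤ)) x}) :
    ((Subgroup.closure (↑s : Set (X ≃ₜ X)) : Subgroup (X ≃ₜ X)) : Set (X ≃ₜ X)).Finite := by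
  rcases finite_or_infinite X with hX | hX
  · have : Finite (X ≃ₜ X) := Finite.of_injective _ DFunLike.coe_injective
    exact Set.toFinite _
  have hinj : Injective (orbitMap φ x) := injective_orbitMap (hmin x)
  set H := fullGroupZ φ
  set t : Set H := H.subtype ⁻¹' s
  have ht : t.Finite := s.finite_toSet.preimage Subtype.val_injective.injOn
  have hst : H.subtype '' t = s :=
    image_preimage_eq_of_subset fun f hf => ⟨⟨f, (hs f hf).1⟩, rfl⟩
  obtain ⟨R, B, hR, hcut⟩ := exists_cutStabilizer_orbitPerm hmin hinj ht fun g hg => (hs g hg).2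
  have hρ : (Subgroup.closure (orbitPerm φ x hinj '' t) : Set (Perm ℤ)).Finite :=
    finite_closure_of_subset_cutStabilizer (ht.image _) hR (image_subset_iff.2 hcut)
  have ht' : (Subgroup.closure t : Set H).Finite := by
    refine Set.Finite.of_finite_image ?_ (injective_orbitPerm hinj (hmin x)).injOn
    rwa [← Subgroup.coe_map, MonoidHom.map_closure]
  rw [← hst, ← MonoidHom.map_closure, Subgroup.coe_map]
  exact ht'.image _
end

section
/- Let Y ⊂ {a,b}^ℤ be the subshift of sequences not containing the pattern 'ba'. Identifying the non-constant elements of Y with ℤ (where n corresponds to the sequence whose transition from a to b occurs at position (n, n+1)), the topological full group ⟦Y⟧ is isomorphic to the group of permutations of ℤ that coincide with a translation outside a finite set. -/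
variable {X : Type*} [TopologicalSpace X]

/-- The subshift over `{a, b}` (here `a = false`, `b = true`) of sequences avoiding the
pattern `ba`. -/
def Yba : Set (ℤ → Bool) := {w | ∀ n : ℤ, ¬(w n = true ∧ w (n + 1) = false)}

/-- The shift homeomorphism on `Yba`. -/
def shiftY : ↥Yba ≃ₜ ↥Yba where
  toFun w := ⟨fun n => (w : ℤ → Bool) (n - 1), fun n => by simpa using w.2 (n - 1)⟩
  invFun w := ⟨fun n => (w : ℤ → Bool) (n + 1), fun n => w.2 (n + 1)⟩
  left_inv w := by ext n; simp
  right_inv w := by ext n; simp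
  continuous_toFun := by
    apply Continuous.subtype_mk
    exact continuous_pi fun n => (continuous_apply (n - 1)).comp continuous_subtype_val
  continuous_invFun := by
    apply Continuous.subtype_mk
    exact continuous_pi fun n => (continuous_apply (n + 1)).comp continuous_subtype_val

/-- The group of permutations of `ℤ` coinciding with a translation outside a finite
set. -/
def nearTranslations : Subgroup (Equiv.Perm ℤ) where
  carrier := {σ | ∃ k : ℤ, {n : ℤ | σ n ≠ n + k}.Finite}
  one_mem' := ⟨0, by simp⟩
  mul_mem' := by
    rintro σ τ ⟨k₁, h₁⟩ ⟨k₂, h₂⟩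
    refine ⟨k₁ + k₂, ((h₁.preimage (τ.injective.injOn)).union h₂).subset ?_⟩
    intro n hn
    simp only [Set.mem_setOf_eq] at hn
    by_contra hc
    simp only [Set.mem_union, Set.mem_preimage, Set.mem_setOf_eq, not_or, not_not] at hc
    apply hn
    have ht : τ n = n + k₂ := hc.2
    have hs : σ (τ n) = τ n + k₁ := hc.1
    show σ (τ n) = n + (k₁ + k₂)
    rw [hs, ht]; ring
  inv_mem' := by
    rintro σ ⟨k, h⟩
    refine ⟨-k, (h.image σ).subset ?_⟩
    intro n hn
    simp only [Set.mem_setOf_eq] at hn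
    refine ⟨σ⁻¹ n, ?_, σ.apply_symm_apply n⟩
    simp only [Set.mem_setOf_eq]
    intro heq
    apply hn
    have h2 : σ (σ⁻¹ n) = n := σ.apply_symm_apply n
    rw [h2] at heq
    omega

/-! The non-constant points of `Yba` are the step sequences `step n`; each is isolated, and
`step n` tends to the constant sequence `a` (resp. `b`) as `n → +∞` (resp. `n → -∞`). An element
`ψ = shift ^ κ` of the full group fixes both constants and sends `step n` to
`step (n + κ (step n))`; as `κ` is locally constant it is eventually `κ a` at `+∞` and `κ b` at
`-∞`, so `ψ` induces a permutation of `ℤ` that is a translation at each end, and counting shows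
that the two translations agree. Conversely a near-translation `σ` lifts to `Yba` by fixing the
constants, with exponent `σ n - n` at `step n`, which is locally constant because it is eventually
the translation amount at both ends. -/

open Filter Topology Function Equiv

lemma continuous_zpow_apply_of_isLocallyConstant {X : Type*} [TopologicalSpace X] (φ : X ≃ₜ X)
    {κ : X → ℤ} (hκ : IsLocallyConstant κ) : Continuous fun x => (φ ^ κ x) x :=
  continuous_iff_continuousAt.2 fun x =>
    (φ ^ κ x).continuous.continuousAt.congr <|
      (hκ.eventually_eq x).mono fun y hy => congrArg (fun k => (φ ^ k) y) hy.symm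

namespace Equiv.Perm

variable {σ : Perm ℤ} {k₁ k₂ : ℤ}

lemma le_of_eventually_eq_add (h₁ : ∀ᶠ n in atTop, σ n = n + k₁)
    (h₂ : ∀ᶠ n in atBot, σ n = n + k₂) : k₁ ≤ k₂ := by
  obtain ⟨N, hN⟩ := eventually_atTop.1
    ((h₁.and (tendsto_neg_atTop_atBot.eventually h₂)).and (eventually_ge_atTop 1))
  -- `σ` maps the `2N - 1` points of `(-N, N)` onto a set containing the `2N - 1 + k₁ - k₂`
  -- points of `(-N + k₂, N + k₁)`.
  have hcover : Finset.Ioo (-N + k₂) (N + k₁) ⊆ (Finset.Ioo (-N) N).image σ := by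
    intro m hm
    rw [Finset.mem_Ioo] at hm
    refine Finset.mem_image.2 ⟨σ.symm m, Finset.mem_Ioo.2 ⟨?_, ?_⟩, σ.apply_symm_apply m⟩
    · by_contra! hle
      have := (hN (-σ.symm m) (by omega)).1.2
      rw [neg_neg, σ.apply_symm_apply] at this
      omega
    · by_contra! hle
      have := (hN (σ.symm m) hle).1.1
      rw [σ.apply_symm_apply] at this
      omega
  have := (Finset.card_le_card hcover).trans Finset.card_image_le
  rw [Int.card_Ioo, Int.card_Ioo] at this
  have := (hN N le_rfl).2
  omega

lemma eventually_inv_apply_eq_add {l : Filter ℤ} (hl : Tendsto (· + -k₁) l l)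
    (h : ∀ᶠ n in l, σ n = n + k₁) : ∀ᶠ n in l, σ⁻¹ n = n + -k₁ := by
  filter_upwards [hl.eventually h] with n hn
  rw [Perm.inv_eq_iff_eq, hn, neg_add_cancel_right]

lemma eq_of_eventually_eq_add (h₁ : ∀ᶠ n in atTop, σ n = n + k₁)
    (h₂ : ∀ᶠ n in atBot, σ n = n + k₂) : k₁ = k₂ :=
  le_antisymm (le_of_eventually_eq_add h₁ h₂) <| neg_le_neg_iff.1 <| le_of_eventually_eq_add
    (eventually_inv_apply_eq_add (tendsto_atTop_add_const_right _ _ tendsto_id) h₁)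
    (eventually_inv_apply_eq_add (tendsto_atBot_add_const_right _ _ tendsto_id) h₂)

end Equiv.Perm

lemma mem_nearTranslations_iff {σ : Perm ℤ} :
    σ ∈ nearTranslations ↔ ∃ k : ℤ, ∀ᶠ n in cofinite, σ n = n + k :=
  exists_congr fun _ => eventually_cofinite.symm

lemma mem_nearTranslations_of_eventually {σ : Perm ℤ} {k₁ k₂ : ℤ}
    (h₁ : ∀ᶠ n in atTop, σ n = n + k₁) (h₂ : ∀ᶠ n in atBot, σ n = n + k₂) :
    σ ∈ nearTranslations := by
  obtain rfl := Perm.eq_of_eventually_eq_add h₁ h₂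
  exact mem_nearTranslations_iff.2 ⟨k₁, by rw [Int.cofinite_eq]; exact eventually_sup.2 ⟨h₂, h₁⟩⟩

namespace Yba

def step (n : ℤ) : Yba :=
  ⟨fun m => decide (n < m), fun m => by
    simp only [decide_eq_true_eq, decide_eq_false_iff_not]
    omega⟩

def constSeq (c : Bool) : Yba := ⟨fun _ => c, by simp [Yba]⟩

@[simp] lemma step_apply (n m : ℤ) : (step n).1 m = decide (n < m) := rfl

@[simp] lemma constSeq_apply (c : Bool) (m : ℤ) : (constSeq c).1 m = c := rfl

lemma step_injective : Injective step := by
  intro n n' h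
  have h₁ := congrArg (fun w : Yba => w.1 (n + 1)) h
  have h₂ := congrArg (fun w : Yba => w.1 (n' + 1)) h
  simp only [step_apply, decide_eq_decide] at h₁ h₂
  omega

lemma step_ne_constSeq (n : ℤ) (c : Bool) : step n ≠ constSeq c := by
  intro h
  have h₁ := congrArg (fun w : Yba => w.1 n) h
  have h₂ := congrArg (fun w : Yba => w.1 (n + 1)) h
  simp only [step_apply, constSeq_apply, lt_self_iff_false, lt_add_iff_pos_right,
    zero_lt_one, decide_false, decide_true] at h₁ h₂
  exact Bool.false_ne_true (h₁.trans h₂.symm)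

lemma monotone_val (w : Yba) : Monotone w.1 :=
  monotone_int_of_le_succ fun n => Bool.le_iff_imp.2 fun hn => by
    by_contra h
    exact w.2 n ⟨hn, by simpa using h⟩

lemma eq_step_of_apply {w : Yba} {n : ℤ} (h₀ : w.1 n = false) (h₁ : w.1 (n + 1) = true) :
    w = step n := by
  refine Subtype.ext (funext fun m => ?_)
  rcases le_or_gt m n with hm | hm
  · rw [step_apply, decide_eq_false hm.not_gt]
    exact le_bot_iff.1 ((monotone_val w hm).trans_eq h₀)
  · rw [step_apply, decide_eq_true hm]
    exact top_le_iff.1 (h₁.symm.trans_le (monotone_val w (show n + 1 ≤ m by omega)))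

lemma eq_constSeq_or_eq_step (w : Yba) : (∃ c, w = constSeq c) ∨ ∃ n, w = step n := by
  by_cases hconst : ∃ c, ∀ m, w.1 m = c
  · obtain ⟨c, hc⟩ := hconst
    exact .inl ⟨c, Subtype.ext (funext hc)⟩
  push Not at hconst
  obtain ⟨m₀, hm₀⟩ := hconst true
  obtain ⟨m₁, hm₁⟩ := hconst false
  have hbdd : ∀ m, w.1 m = true → m₀ ≤ m := fun m hm => by
    by_contra! hlt
    exact hm₀ (top_le_iff.1 (hm.symm.trans_le (monotone_val w hlt.le)))
  obtain ⟨l, hl, hmin⟩ := Int.exists_least_of_bdd ⟨m₀, hbdd⟩ ⟨m₁, by simpa using hm₁⟩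
  refine .inr ⟨l - 1, eq_step_of_apply ?_ (by simpa using hl)⟩
  by_contra h
  have := hmin (l - 1) (by simpa using h)
  omega

lemma shiftY_zpow_apply (k : ℤ) (w : Yba) (m : ℤ) : ((shiftY ^ k) w).1 m = w.1 (m - k) := by
  induction k using Int.induction_on generalizing w with
  | zero => simp
  | succ i ih =>
    rw [zpow_add_one, homeo_mul_apply, ih]
    exact congrArg w.1 (by ring)
  | pred i ih =>
    rw [zpow_sub_one, homeo_mul_apply, ih]
    exact congrArg w.1 (by ring)

lemma shiftY_zpow_step (k n : ℤ) : (shiftY ^ k) (step n) = step (n + k) :=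
  Subtype.ext <| funext fun m => by
    simp only [shiftY_zpow_apply, step_apply, decide_eq_decide]
    omega

lemma shiftY_zpow_constSeq (k : ℤ) (c : Bool) : (shiftY ^ k) (constSeq c) = constSeq c :=
  Subtype.ext (funext fun m => shiftY_zpow_apply k _ m)

lemma isOpen_setOf_apply_eq (m : ℤ) (c : Bool) : IsOpen {w : Yba | w.1 m = c} :=
  (isOpen_discrete {c}).preimage (f := fun w : Yba => w.1 m)
    ((continuous_apply m).comp continuous_subtype_val)

lemma tendsto_step_atTop : Tendsto step atTop (𝓝 (constSeq false)) := by
  rw [Topology.IsInducing.subtypeVal.tendsto_nhds_iff, tendsto_pi_nhds]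
  refine fun m => tendsto_const_nhds.congr' ?_
  filter_upwards [eventually_ge_atTop m] with n hn
  simp [hn]

lemma tendsto_step_atBot : Tendsto step atBot (𝓝 (constSeq true)) := by
  rw [Topology.IsInducing.subtypeVal.tendsto_nhds_iff, tendsto_pi_nhds]
  refine fun m => tendsto_const_nhds.congr' ?_
  filter_upwards [eventually_lt_atBot m] with n hn
  simp [hn]

lemma isLocallyConstant_of_eventually {β : Type*} {f : Yba → β}
    (htop : ∀ᶠ n in atTop, f (step n) = f (constSeq false))
    (hbot : ∀ᶠ n in atBot, f (step n) = f (constSeq true)) : IsLocallyConstant f := by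
  rw [IsLocallyConstant.iff_eventually_eq]
  intro w
  rcases eq_constSeq_or_eq_step w with ⟨_ | _, rfl⟩ | ⟨n, rfl⟩
  · obtain ⟨N, hN⟩ := eventually_atTop.1 htop
    filter_upwards [(isOpen_setOf_apply_eq N false).mem_nhds rfl] with w hw
    rcases eq_constSeq_or_eq_step w with ⟨c, rfl⟩ | ⟨n, rfl⟩
    · rw [show c = false from hw]
    · exact hN n (by simpa using hw)
  · obtain ⟨N, hN⟩ := eventually_atBot.1 hbot
    filter_upwards [(isOpen_setOf_apply_eq (N + 1) true).mem_nhds rfl] with w hw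
    rcases eq_constSeq_or_eq_step w with ⟨c, rfl⟩ | ⟨n, rfl⟩
    · rw [show c = true from hw]
    · exact hN n (by simp only [step_apply, decide_eq_true_eq] at hw; omega)
  · have hopen := (isOpen_setOf_apply_eq n false).inter (isOpen_setOf_apply_eq (n + 1) true)
    filter_upwards [hopen.mem_nhds (by simp)] with w ⟨h₀, h₁⟩
    rw [eq_step_of_apply h₀ h₁]

section FullGroup

variable {ψ : Yba ≃ₜ Yba}

lemma apply_constSeq_of_mem_fullGroupZ (hψ : ψ ∈ fullGroupZ shiftY) (c : Bool) :
    ψ (constSeq c) = constSeq c := by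
  obtain ⟨κ, -, hκ⟩ := hψ
  rw [hκ, shiftY_zpow_constSeq]

lemma step_invFun_apply_step (hψ : ψ ∈ fullGroupZ shiftY) (n : ℤ) :
    step (invFun step (ψ (step n))) = ψ (step n) := by
  obtain ⟨κ, -, hκ⟩ := hψ
  exact invFun_eq ⟨n + κ (step n), by rw [hκ, shiftY_zpow_step]⟩

noncomputable instance : MulAction (fullGroupZ shiftY) ℤ where
  smul g n := invFun step ((g : Yba ≃ₜ Yba) (step n))
  one_smul := leftInverse_invFun step_injective
  mul_smul g h n := by
    change invFun step (g.1 (h.1 (step n))) =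
      invFun step (g.1 (step (invFun step (h.1 (step n)))))
    rw [step_invFun_apply_step h.2]

lemma step_smul (g : fullGroupZ shiftY) (n : ℤ) : step (g • n) = (g : Yba ≃ₜ Yba) (step n) :=
  step_invFun_apply_step g.2 n

lemma toPermHom_mem_nearTranslations (g : fullGroupZ shiftY) :
    MulAction.toPermHom (fullGroupZ shiftY) ℤ g ∈ nearTranslations := by
  obtain ⟨κ, hκ, hg⟩ := g.2
  have hsmul (n : ℤ) : g • n = n + κ (step n) :=
    step_injective (by rw [step_smul, hg, shiftY_zpow_step])
  exact mem_nearTranslations_of_eventually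
    ((tendsto_step_atTop.eventually (hκ.eventually_eq _)).mono fun n hn => by
      rw [MulAction.toPermHom_apply, MulAction.toPerm_apply, hsmul, hn])
    ((tendsto_step_atBot.eventually (hκ.eventually_eq _)).mono fun n hn => by
      rw [MulAction.toPermHom_apply, MulAction.toPerm_apply, hsmul, hn])

end FullGroup

section Lift

variable (σ : Perm ℤ)

noncomputable def liftPerm : Yba → Yba := extend step (step ∘ σ) id

lemma liftPerm_step (n : ℤ) : liftPerm σ (step n) = step (σ n) :=
  step_injective.extend_apply _ _ n

lemma liftPerm_constSeq (c : Bool) : liftPerm σ (constSeq c) = constSeq c :=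
  extend_apply' _ _ _ fun ⟨n, hn⟩ => step_ne_constSeq n c hn

lemma liftPerm_inv_apply (w : Yba) : liftPerm σ⁻¹ (liftPerm σ w) = w := by
  rcases eq_constSeq_or_eq_step w with ⟨c, rfl⟩ | ⟨n, rfl⟩
  · rw [liftPerm_constSeq, liftPerm_constSeq]
  · rw [liftPerm_step, liftPerm_step, ← Perm.mul_apply, inv_mul_cancel, Perm.one_apply]

/-- The exponent realising `liftPerm σ` as a piecewise power of the shift. Its value `k` at the
two constant sequences does not affect `liftPerm σ`, but it must be the eventual translation amount
of `σ` for the exponent to be locally constant. -/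
noncomputable def liftExponent (k : ℤ) : Yba → ℤ := extend step (fun n => σ n - n) fun _ => k

lemma liftPerm_eq_zpow_liftExponent (k : ℤ) (w : Yba) :
    liftPerm σ w = (shiftY ^ liftExponent σ k w) w := by
  rcases eq_constSeq_or_eq_step w with ⟨c, rfl⟩ | ⟨n, rfl⟩
  · rw [liftPerm_constSeq, shiftY_zpow_constSeq]
  · rw [liftPerm_step, liftExponent, step_injective.extend_apply, shiftY_zpow_step,
      add_sub_cancel]

lemma isLocallyConstant_liftExponent {k : ℤ} (h : ∀ᶠ n in cofinite, σ n = n + k) :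
    IsLocallyConstant (liftExponent σ k) := by
  have hstep : ∀ᶠ n in cofinite, liftExponent σ k (step n) = k := h.mono fun n hn => by
    rw [liftExponent, step_injective.extend_apply, hn, add_sub_cancel_left]
  have hconst (c : Bool) : liftExponent σ k (constSeq c) = k :=
    extend_apply' _ _ _ fun ⟨n, hn⟩ => step_ne_constSeq n c hn
  rw [Int.cofinite_eq, eventually_sup] at hstep
  exact isLocallyConstant_of_eventually (by simpa only [hconst] using hstep.2)
    (by simpa only [hconst] using hstep.1)

lemma exists_isLocallyConstant_liftPerm_eq (hσ : σ ∈ nearTranslations) :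
    ∃ κ : Yba → ℤ, IsLocallyConstant κ ∧ ∀ w, liftPerm σ w = (shiftY ^ κ w) w :=
  let ⟨k, hk⟩ := mem_nearTranslations_iff.1 hσ
  ⟨liftExponent σ k, isLocallyConstant_liftExponent σ hk, liftPerm_eq_zpow_liftExponent σ k⟩

lemma continuous_liftPerm (hσ : σ ∈ nearTranslations) : Continuous (liftPerm σ) := by
  obtain ⟨κ, hκ, hσκ⟩ := exists_isLocallyConstant_liftPerm_eq σ hσ
  simpa only [← hσκ] using continuous_zpow_apply_of_isLocallyConstant shiftY hκ

end Lift

noncomputable def liftHomeomorph (σ : nearTranslations) : Yba ≃ₜ Yba where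
  toFun := liftPerm σ
  invFun := liftPerm (σ : Perm ℤ)⁻¹
  left_inv := liftPerm_inv_apply σ
  right_inv w := by simpa only [inv_inv] using liftPerm_inv_apply (σ : Perm ℤ)⁻¹ w
  continuous_toFun := continuous_liftPerm σ σ.2
  continuous_invFun := continuous_liftPerm _ (inv_mem σ.2)

lemma liftHomeomorph_mem_fullGroupZ (σ : nearTranslations) :
    liftHomeomorph σ ∈ fullGroupZ shiftY :=
  exists_isLocallyConstant_liftPerm_eq σ σ.2

noncomputable def fullGroupZToNearTranslations : fullGroupZ shiftY →* nearTranslations :=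
  (MulAction.toPermHom (fullGroupZ shiftY) ℤ).codRestrict _ toPermHom_mem_nearTranslations

lemma step_fullGroupZToNearTranslations_apply (g : fullGroupZ shiftY) (n : ℤ) :
    step ((fullGroupZToNearTranslations g : Perm ℤ) n) = (g : Yba ≃ₜ Yba) (step n) :=
  step_smul g n

lemma fullGroupZToNearTranslations_injective : Injective fullGroupZToNearTranslations := by
  intro g g' h
  refine Subtype.ext (Homeomorph.ext fun w => ?_)
  rcases eq_constSeq_or_eq_step w with ⟨c, rfl⟩ | ⟨n, rfl⟩
  · rw [apply_constSeq_of_mem_fullGroupZ g.2, apply_constSeq_of_mem_fullGroupZ g'.2]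
  · rw [← step_fullGroupZToNearTranslations_apply, ← step_fullGroupZToNearTranslations_apply, h]

lemma fullGroupZToNearTranslations_surjective : Surjective fullGroupZToNearTranslations := by
  intro σ
  refine ⟨⟨liftHomeomorph σ, liftHomeomorph_mem_fullGroupZ σ⟩, Subtype.ext <| Equiv.ext fun n => ?_⟩
  apply step_injective
  rw [step_fullGroupZToNearTranslations_apply]
  exact liftPerm_step σ n

end Yba

/-- the topological full group of the subshift `Yba` is isomorphic to the
group of permutations of `ℤ` that coincide with a translation outside a finite set. -/
theorem statement17 : Nonempty (↥(fullGroupZ shiftY) ≃* ↥nearTranslations) :=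
  ⟨MulEquiv.ofBijective _ ⟨Yba.fullGroupZToNearTranslations_injective,
    Yba.fullGroupZToNearTranslations_surjective⟩⟩
end
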